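/- Let H be exponential with mean λ and D be independent with density f_D(y) = (2/(α(R₂² − R₁²))) y^{2/α − 1} on [R₁^α, R₂^α]. Then the CDF of g = H/D satisfies F_g(x) = 1 − (2/(α(R₂² − R₁²))) (λ/x)^{2/α} [γ(2/α, R₂^α x/λ) − γ(2/α, R₁^α x/λ)] for x > 0. -/

import Mathlib

open MeasureTheory

/-- The lower incomplete gamma function `γ(a,b) = ∫₀ᵇ t^(a−1) e^(−t) dt`. -/
noncomputable def lowerGamma (a b : ℝ) : ℝ :=
  ∫ t in Set.Ioc (0 : ℝ) b, t ^ (a - 1) * Real.exp (-t)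

/-!
By independence, `ℙ(H/D ≤ x) = E[ℙ(H ≤ xD | D)]`, and since `D > 0` almost surely the
exponential tail gives `ℙ(H/D ≤ x) = 1 - E[exp(-xD/λ)]`. Against the power-law density of `D`
on `[R₁^α, R₂^α]`, the substitution `t = xy/λ` turns this Laplace transform into
`(λ/x)^(2/α)` times an integral of the gamma integrand over `[R₁^α x/λ, R₂^α x/λ]`, i.e. a
difference of lower incomplete gamma functions.
-/

open Real Set

section

-- Scoped: `ProbabilityTheory` declares the notation `ℙ`, a binder name of `ratio_cdf_far`.
open ProbabilityTheory

lemma lowerGamma_sub_lowerGamma {p a b : ℝ} (hp : 0 < p) (ha : 0 ≤ a) (hb : 0 ≤ b) :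
    lowerGamma p b - lowerGamma p a = ∫ t in a..b, t ^ (p - 1) * exp (-t) := by
  have hint : IntegrableOn (fun t : ℝ => t ^ (p - 1) * exp (-t)) (Ioi 0) := by
    simpa only [mul_comm] using GammaIntegral_convergent hp
  have hint_from_zero {c : ℝ} (hc : 0 ≤ c) :
      IntervalIntegrable (fun t : ℝ => t ^ (p - 1) * exp (-t)) volume 0 c :=
    (intervalIntegrable_iff_integrableOn_Ioc_of_le hc).mpr (hint.mono_set Ioc_subset_Ioi_self)
  rw [lowerGamma, lowerGamma, ← intervalIntegral.integral_of_le hb,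
    ← intervalIntegral.integral_of_le ha,
    intervalIntegral.integral_interval_sub_left (hint_from_zero hb) (hint_from_zero ha)]

lemma integral_rpow_mul_exp_neg_mul {p k a b : ℝ} (hp : 0 < p) (hk : 0 < k) (ha : 0 ≤ a)
    (hb : 0 ≤ b) :
    ∫ y in a..b, y ^ (p - 1) * exp (-(k * y)) =
      k ^ (-p) * (lowerGamma p (k * b) - lowerGamma p (k * a)) := by
  have hscale : ∀ y ∈ uIcc a b, (k * y) ^ (p - 1) * exp (-(k * y)) =
      k ^ (p - 1) * (y ^ (p - 1) * exp (-(k * y))) := fun y hy => by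
    rw [mul_rpow hk.le (le_min ha hb |>.trans hy.1), mul_assoc]
  rw [lowerGamma_sub_lowerGamma hp (by positivity) (by positivity),
    ← intervalIntegral.smul_integral_comp_mul_left (fun t => t ^ (p - 1) * exp (-t)) k,
    intervalIntegral.integral_congr hscale, intervalIntegral.integral_const_mul, smul_eq_mul,
    ← mul_assoc, ← mul_assoc, ← rpow_add_one hk.ne', ← rpow_add hk,
    show -p + 1 + (p - 1) = 0 by ring, rpow_zero, one_mul]

lemma ae_mem_of_withDensity_ofReal_indicator {α : Type*} [MeasurableSpace α] {μ : Measure α}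
    {S : Set α} (hS : MeasurableSet S) (f : α → ℝ) :
    ∀ᵐ y ∂μ.withDensity (fun y => ENNReal.ofReal (S.indicator f y)), y ∈ S := by
  rw [ae_iff, ← compl_ofPred, ofPred_mem_eq, withDensity_apply _ hS.compl]
  exact setLIntegral_eq_zero hS.compl fun y hy => by simp [indicator_of_notMem hy]

lemma integral_withDensity_ofReal_indicator {α : Type*} [MeasurableSpace α] {μ : Measure α}
    {S : Set α} (hS : MeasurableSet S) {f : α → ℝ} (hf : Measurable f) (hf0 : ∀ y ∈ S, 0 ≤ f y)
    (g : α → ℝ) :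
    ∫ y, g y ∂μ.withDensity (fun y => ENNReal.ofReal (S.indicator f y)) =
      ∫ y in S, f y * g y ∂μ := by
  rw [integral_withDensity_eq_integral_toReal_smul ((hf.indicator hS).ennreal_ofReal)
    (ae_of_all _ fun _ => ENNReal.ofReal_lt_top), ← integral_indicator hS]
  congr 1 with y
  by_cases hy : y ∈ S
  · simp [hy, hf0 y hy]
  · simp [hy]

lemma measure_div_le_eq_lintegral {Ω : Type*} [MeasurableSpace Ω] {μ : Measure Ω}
    [IsFiniteMeasure μ] {H D : Ω → ℝ} (hH : Measurable H) (hD : Measurable D)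
    (hindep : IndepFun H D μ) (x : ℝ) :
    μ {ω | H ω / D ω ≤ x} = ∫⁻ y, μ.map H {h | h / y ≤ x} ∂μ.map D := by
  have hs : MeasurableSet {q : ℝ × ℝ | q.1 / q.2 ≤ x} :=
    measurableSet_le (measurable_fst.div measurable_snd) measurable_const
  calc μ {ω | H ω / D ω ≤ x} = μ.map (fun ω => (H ω, D ω)) {q | q.1 / q.2 ≤ x} :=
        (Measure.map_apply (hH.prodMk hD) hs).symm
    _ = (μ.map H).prod (μ.map D) {q | q.1 / q.2 ≤ x} := by
        rw [hindep.map_prod_eq_prod_map_map hH.aemeasurable hD.aemeasurable]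
    _ = _ := Measure.prod_apply_symm hs

lemma withDensity_exponential_eq_expMeasure (lam : ℝ) :
    volume.withDensity (fun h => ENNReal.ofReal
      ((Ioi 0).indicator (fun t => (1 / lam) * exp (-t / lam)) h)) = expMeasure lam⁻¹ := by
  refine (withDensity_congr_ae ?_).trans (rfl : volume.withDensity (exponentialPDF lam⁻¹) = _)
  filter_upwards [measure_singleton (0 : ℝ) |> compl_mem_ae_iff.mpr] with t ht
  rcases lt_or_gt_of_ne ht with ht | ht
  · rw [exponentialPDF_of_neg ht, indicator_of_notMem (notMem_Ioi.mpr ht.le), ENNReal.ofReal_zero]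
  · rw [exponentialPDF_of_nonneg ht.le, indicator_of_mem (mem_Ioi.mpr ht)]
    ring_nf

lemma expMeasure_Iic {r s : ℝ} (hr : 0 < r) (hs : 0 ≤ s) :
    expMeasure r (Iic s) = ENNReal.ofReal (1 - exp (-(r * s))) := by
  have := isProbabilityMeasure_expMeasure hr
  rw [← ofReal_cdf, cdf_expMeasure_eq hr, if_pos hs]

lemma lintegral_ofReal_one_sub {α : Type*} [MeasurableSpace α] {ν : Measure α}
    [IsProbabilityMeasure ν] {g : α → ℝ} (hg : AEStronglyMeasurable g ν)
    (hg01 : ∀ᵐ y ∂ν, 0 ≤ g y ∧ g y ≤ 1) :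
    ∫⁻ y, ENNReal.ofReal (1 - g y) ∂ν = ENNReal.ofReal (1 - ∫ y, g y ∂ν) := by
  have hint : Integrable g ν := Integrable.of_bound hg 1 <| by
    filter_upwards [hg01] with y hy using (norm_of_nonneg hy.1).trans_le hy.2
  rw [← ofReal_integral_eq_lintegral_ofReal (f := fun y => 1 - g y) ((integrable_const 1).sub hint)
    (by filter_upwards [hg01] with y hy using sub_nonneg.mpr hy.2), integral_sub
    (integrable_const 1) hint, integral_const, probReal_univ, one_smul]

lemma measure_div_le_eq_one_sub_integral_exp {Ω : Type*} [MeasurableSpace Ω] {μ : Measure Ω}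
    [IsProbabilityMeasure μ] {H D : Ω → ℝ} (hH : Measurable H) (hD : Measurable D)
    (hindep : IndepFun H D μ) {r : ℝ} (hr : 0 < r) (hlaw : μ.map H = expMeasure r)
    (hD_pos : ∀ᵐ y ∂μ.map D, 0 < y) {x : ℝ} (hx : 0 ≤ x) :
    μ {ω | H ω / D ω ≤ x} = ENNReal.ofReal (1 - ∫ y, exp (-(r * x * y)) ∂μ.map D) := by
  have : IsProbabilityMeasure (μ.map D) := Measure.isProbabilityMeasure_map hD.aemeasurable
  rw [measure_div_le_eq_lintegral hH hD hindep, ← lintegral_ofReal_one_sub (by fun_prop)]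
  · refine lintegral_congr_ae ?_
    filter_upwards [hD_pos] with y hy
    have hset : {h : ℝ | h / y ≤ x} = Iic (x * y) := by ext h; simp [div_le_iff₀ hy]
    rw [hlaw, hset, expMeasure_Iic hr (by positivity), mul_assoc]
  · filter_upwards [hD_pos] with y hy
    exact ⟨(exp_pos _).le, exp_le_one_iff.mpr (neg_nonpos.mpr (by positivity))⟩

lemma integral_exp_neg_mul_withDensity_rpow {a b c p k : ℝ} (ha : 0 < a) (hab : a ≤ b)
    (hc : 0 ≤ c) (hp : 0 < p) (hk : 0 < k) :
    ∫ y, exp (-(k * y)) ∂volume.withDensity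
        (fun y => ENNReal.ofReal ((Icc a b).indicator (fun z => c * z ^ (p - 1)) y)) =
      c * k ^ (-p) * (lowerGamma p (k * b) - lowerGamma p (k * a)) := by
  rw [integral_withDensity_ofReal_indicator measurableSet_Icc (by fun_prop)
      (fun y hy => by have := ha.trans_le hy.1; positivity),
    integral_Icc_eq_integral_Ioc, ← intervalIntegral.integral_of_le hab]
  simp_rw [mul_assoc, intervalIntegral.integral_const_mul]
  rw [integral_rpow_mul_exp_neg_mul hp hk ha.le (ha.le.trans hab)]

end

/-- If `H ~ Exp(1/λ)` and `D` is independent with density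
`(2/(α(R₂² − R₁²))) y^(2/α − 1)` on `[R₁^α, R₂^α]`, then the CDF of `g = H/D` satisfies
`F_g(x) = 1 − (2/(α(R₂² − R₁²))) (λ/x)^(2/α) [γ(2/α, R₂^α x/λ) − γ(2/α, R₁^α x/λ)]`
for `x > 0`. -/
theorem ratio_cdf_far {Ω : Type*} [MeasurableSpace Ω]
    (ℙ : Measure Ω) [IsProbabilityMeasure ℙ]
    (R₁ R₂ α lam : ℝ) (hR₁ : 0 < R₁) (hR : R₁ < R₂) (hα : 0 < α) (hlam : 0 < lam)
    (H D : Ω → ℝ) (hH : Measurable H) (hD : Measurable D)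
    (hindep : ProbabilityTheory.IndepFun H D ℙ)
    (hHpdf : Measure.map H ℙ =
      (volume : Measure ℝ).withDensity (fun h =>
        ENNReal.ofReal (Set.indicator (Set.Ioi 0)
          (fun t => (1 / lam) * Real.exp (-t / lam)) h)))
    (hDpdf : Measure.map D ℙ =
      (volume : Measure ℝ).withDensity (fun y =>
        ENNReal.ofReal (Set.indicator (Set.Icc (R₁ ^ α) (R₂ ^ α))
          (fun z => 2 / (α * (R₂ ^ 2 - R₁ ^ 2)) * z ^ (2 / α - 1)) y))) :
    ∀ x : ℝ, 0 < x →
      ℙ {ω | H ω / D ω ≤ x} =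
        ENNReal.ofReal (1 - 2 / (α * (R₂ ^ 2 - R₁ ^ 2)) * (lam / x) ^ (2 / α) *
          (lowerGamma (2 / α) (R₂ ^ α * x / lam) -
            lowerGamma (2 / α) (R₁ ^ α * x / lam))) := by
  intro x hx
  have ha : 0 < R₁ ^ α := rpow_pos_of_pos hR₁ α
  have hc : 0 ≤ 2 / (α * (R₂ ^ 2 - R₁ ^ 2)) :=
    div_nonneg zero_le_two (mul_nonneg hα.le (sub_nonneg.mpr (pow_le_pow_left₀ hR₁.le hR.le 2)))
  have hD_pos : ∀ᵐ y ∂ℙ.map D, 0 < y := by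
    rw [hDpdf]
    filter_upwards [ae_mem_of_withDensity_ofReal_indicator measurableSet_Icc _] with y hy
    exact ha.trans_le hy.1
  have hk : 0 < lam⁻¹ * x := mul_pos (inv_pos.mpr hlam) hx
  rw [measure_div_le_eq_one_sub_integral_exp hH hD hindep (inv_pos.mpr hlam)
      (hHpdf.trans (withDensity_exponential_eq_expMeasure lam)) hD_pos hx.le, hDpdf,
    integral_exp_neg_mul_withDensity_rpow ha (rpow_le_rpow hR₁.le hR.le hα.le) hc
      (div_pos two_pos hα) hk,
    rpow_neg hk.le, ← inv_rpow hk.le, mul_inv, inv_inv, ← div_eq_mul_inv]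
  ring_nf
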